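/- For every equalizer g ∈ ℂ and every weight w > 0 one has ξ(w, g) ≥ 1 − R, and equality is attained at the pair g* = conj(a)/T and w* = T/I. Consequently the infimum of ξ(w, g) over (w, g) ∈ (0, ∞) × ℂ equals 1 − ln(1 + |a|²/I) and is attained; i.e., the weighted minimum mean square error satisfies ξ^MMSE = 1 − R (Proposition 1, Rate–WMMSE relationship). -/

import Mathlib

/-!
Completing the square gives `ε(g) = T‖g − conj(a)/T‖² + I/T`, so the MSE is at least the MMSE
`I/T`, attained at `g*`. For a fixed MSE value `e > 0`, the bound `ln x ≤ x − 1` at `x = w e` gives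
`w e − ln w ≥ 1 + ln e`, attained at `w = 1/e`. With `e = I/T` this is `1 − ln(T/I) = 1 − R`.
-/

open ComplexConjugate

theorem mul_norm_sub_conj_div_sq (g a : ℂ) {T : ℝ} (hT : T ≠ 0) :
    T * ‖g - conj a / T‖ ^ 2 = ‖g‖ ^ 2 * T - 2 * (g * a).re + ‖a‖ ^ 2 / T := by
  have hTc : (T : ℂ) ≠ 0 := by exact_mod_cast hT
  have hcross : (g * conj (conj a / T)).re = (g * a).re / T := by
    rw [map_div₀, Complex.conj_conj, Complex.conj_ofReal, mul_div_assoc', Complex.div_ofReal_re]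
  simp only [Complex.sq_norm, Complex.normSq_sub, hcross, Complex.normSq_div,
    Complex.normSq_conj, Complex.normSq_ofReal]
  field_simp
  ring

theorem mse_eq_mul_norm_sub_sq_add_mmse (g a : ℂ) {I T : ℝ} (hT : T = I + ‖a‖ ^ 2) (hT0 : 0 < T) :
    ‖g‖ ^ 2 * T - 2 * (g * a).re + 1 = T * ‖g - conj a / T‖ ^ 2 + I / T := by
  rw [mul_norm_sub_conj_div_sq g a hT0.ne']
  field_simp
  linarith

theorem one_add_log_le_mul_sub_log {c w : ℝ} (hc : 0 < c) (hw : 0 < w) :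
    1 + Real.log c ≤ w * c - Real.log w := by
  have := Real.log_le_sub_one_of_pos (mul_pos hw hc)
  rw [Real.log_mul hw.ne' hc.ne'] at this
  linarith

theorem inv_mul_sub_log_inv {c : ℝ} (hc : 0 < c) :
    c⁻¹ * c - Real.log c⁻¹ = 1 + Real.log c := by
  rw [inv_mul_cancel₀ hc.ne', Real.log_inv, sub_neg_eq_add]

theorem rate_wmmse_relationship_general
    (I : ℝ) (hI : 0 < I)
    (a : ℂ)
    (T : ℝ) (hT : T = I + ‖a‖ ^ 2)
    (ε : ℂ → ℝ) (hε : ∀ g : ℂ, ε g = ‖g‖ ^ 2 * T - 2 * (g * a).re + 1)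
    (ξ : ℝ → ℂ → ℝ) (hξ : ∀ (w : ℝ) (g : ℂ), ξ w g = w * ε g - Real.log w)
    (R : ℝ) (hR : R = Real.log (1 + ‖a‖ ^ 2 / I)) :
    (∀ w : ℝ, 0 < w → ∀ g : ℂ, ξ w g ≥ 1 - R) ∧
    ξ (T / I) (starRingEnd ℂ a / (T : ℂ)) = 1 - R ∧
    IsLeast {y : ℝ | ∃ w : ℝ, ∃ g : ℂ, 0 < w ∧ y = ξ w g}
      (1 - Real.log (1 + ‖a‖ ^ 2 / I)) := by
  have hT0 : 0 < T := hT ▸ by positivity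
  have hmmse : 0 < I / T := by positivity
  have hR' : 1 - R = 1 + Real.log (I / T) := by
    have hsnr : 1 + ‖a‖ ^ 2 / I = (I / T)⁻¹ := by
      rw [inv_div, hT]
      field_simp
    rw [hR, hsnr, Real.log_inv]
    ring
  have hε_ge : ∀ g, I / T ≤ ε g := fun g => by
    rw [hε, mse_eq_mul_norm_sub_sq_add_mmse g a hT hT0]
    exact le_add_of_nonneg_left (by positivity)
  have hlower : ∀ w : ℝ, 0 < w → ∀ g : ℂ, ξ w g ≥ 1 - R := fun w hw g => by
    rw [hξ, hR']
    linarith [one_add_log_le_mul_sub_log hmmse hw, mul_le_mul_of_nonneg_left (hε_ge g) hw.le]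
  have hattained : ξ (T / I) (conj a / T) = 1 - R := by
    rw [hξ, hε, mse_eq_mul_norm_sub_sq_add_mmse _ a hT hT0, sub_self, norm_zero,
      zero_pow two_ne_zero, mul_zero, zero_add, hR', ← inv_div, inv_mul_sub_log_inv hmmse]
  refine ⟨hlower, hattained, ⟨T / I, conj a / T, by positivity, by rw [hattained, hR]⟩, ?_⟩
  rintro y ⟨w, g, hw, rfl⟩
  exact hR ▸ hlower w hw g

/-- **Proposition 1, Rate–WMMSE relationship.**
For vectors `h, p ∈ ℂ^N` with `a = hᴴp`, interference-plus-noise power `I > 0`,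
`T = I + |a|²`, MSE `ε(g) = |g|²T − 2 Re(g a) + 1`, weighted MSE
`ξ(w, g) = w ε(g) − ln w` and rate `R = ln(1 + |a|²/I)`:
for every `g ∈ ℂ` and `w > 0` one has `ξ(w, g) ≥ 1 − R`; equality is attained at
`g* = conj(a)/T`, `w* = T/I`; and the infimum of `ξ` over `(0,∞) × ℂ` equals
`1 − ln(1 + |a|²/I)` and is attained (`ξ^MMSE = 1 − R`). -/
theorem rate_wmmse_relationship
    (N : ℕ) (hN : 1 ≤ N) (h p : Fin N → ℂ) (I : ℝ) (hI : 0 < I)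
    (a : ℂ) (ha : a = ∑ i, starRingEnd ℂ (h i) * p i)
    (T : ℝ) (hT : T = I + ‖a‖ ^ 2)
    (ε : ℂ → ℝ) (hε : ∀ g : ℂ, ε g = ‖g‖ ^ 2 * T - 2 * (g * a).re + 1)
    (ξ : ℝ → ℂ → ℝ) (hξ : ∀ (w : ℝ) (g : ℂ), ξ w g = w * ε g - Real.log w)
    (R : ℝ) (hR : R = Real.log (1 + ‖a‖ ^ 2 / I)) :
    (∀ w : ℝ, 0 < w → ∀ g : ℂ, ξ w g ≥ 1 - R) ∧
    ξ (T / I) (starRingEnd ℂ a / (T : ℂ)) = 1 - R ∧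
    IsLeast {y : ℝ | ∃ w : ℝ, ∃ g : ℂ, 0 < w ∧ y = ξ w g}
      (1 - Real.log (1 + ‖a‖ ^ 2 / I)) :=
  rate_wmmse_relationship_general I hI a T hT ε hε ξ hξ R hR
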